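/- arXiv:2210.03656 — 3 statements merged into one kernel-verified Lean document; each statement's English description precedes it below -/
import Mathlib

section
/- Let q = 2^k and 0 ≤ m < q. Then each solution (a,b,c) in nonnegative integers of the system a+b+c = 2m, a⊕b⊕c = 0 corresponds bijectively to exactly three solutions of the system A+B+C = 2(m+q), A⊕B⊕C = 0, namely (a+q,b+q,c), (a+q,b,c+q), and (a,b+q,c+q). -/
lemma add_pow_xor {k a : ℕ} (h : a < 2^k) : a + 2^k = a ^^^ 2^k := by
  refine Nat.eq_of_testBit_eq fun i => ?_
  rcases lt_trichotomy i k with hi | rfl | hi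
  · rw [Nat.add_comm, Nat.testBit_two_pow_add_gt hi, Nat.testBit_xor,
      Nat.testBit_two_pow_of_ne (by omega), Bool.xor_false]
  · rw [Nat.add_comm, Nat.testBit_two_pow_add_eq, Nat.testBit_xor, Nat.testBit_two_pow_self,
      Nat.testBit_eq_false_of_lt h, Bool.xor_true, Bool.not_false]
  · have h1 : 2^(k+1) ≤ 2^i := Nat.pow_le_pow_right (by norm_num) hi
    have h2 : 2^(k+1) = 2*2^k := by ring
    rw [Nat.testBit_eq_false_of_lt (by omega),
      Nat.testBit_xor, Nat.testBit_eq_false_of_lt (by omega),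
      Nat.testBit_two_pow_of_ne (by omega)]
    rfl

lemma xor_shuffle1 (q a b c : ℕ) : (a^^^q) ^^^ (b^^^q) ^^^ c = a ^^^ b ^^^ c := by
  have : (a^^^q) ^^^ (b^^^q) ^^^ c = (q^^^q) ^^^ ((a ^^^ b) ^^^ c) := by ac_rfl
  simp [this]

lemma xor_shuffle2 (q a b c : ℕ) : (a^^^q) ^^^ b ^^^ (c^^^q) = a ^^^ b ^^^ c := by
  have : (a^^^q) ^^^ b ^^^ (c^^^q) = (q^^^q) ^^^ ((a ^^^ b) ^^^ c) := by ac_rfl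
  simp [this]

lemma xor_shuffle3 (q a b c : ℕ) : a ^^^ (b^^^q) ^^^ (c^^^q) = a ^^^ b ^^^ c := by
  have : a ^^^ (b^^^q) ^^^ (c^^^q) = (q^^^q) ^^^ ((a ^^^ b) ^^^ c) := by ac_rfl
  simp [this]

lemma testBit_true_of {k a : ℕ} (h1 : 2^k ≤ a) (h2 : a < 2^(k+1)) : a.testBit k = true := by
  rw [Nat.testBit_eq_decide_div_mod_eq]
  have hp2 : (2:ℕ)^(k+1) = 2*2^k := by ring
  have h3 : a / 2^k = 1 := Nat.div_eq_of_lt_le (by omega) (by omega)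
  simp [h3]

lemma sum3_le {k a b c : ℕ} (hx : a ^^^ b ^^^ c = 0) (ha : a < 2^k) (hb : b < 2^k)
    (hc : c < 2^k) : a + b + c ≤ 2^(k+1) - 2 := by
  induction k generalizing a b c with
  | zero => interval_cases a <;> interval_cases b <;> interval_cases c <;> simp_all
  | succ k ih =>
    have hd : a/2 ^^^ b/2 ^^^ c/2 = 0 := by
      rw [← Nat.xor_div_two, ← Nat.xor_div_two, hx]
    have hp2 : (2:ℕ)^(k+1) = 2*2^k := by ring
    have hp3 : (2:ℕ)^(k+2) = 2*2^(k+1) := by ring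
    have hk1 : (1:ℕ) ≤ 2^k := Nat.one_le_two_pow
    have h1 := ih hd (by omega) (by omega) (by omega)
    have hm : (a + b + c) % 2 = 0 := by
      have : (a ^^^ b ^^^ c) % 2 = ((a + b) + c) % 2 := by
        rw [Nat.xor_mod_two_eq, Nat.add_mod, Nat.xor_mod_two_eq, ← Nat.add_mod]
      omega
    omega

lemma lt_of_sol {k m a b c : ℕ} (hx : a ^^^ b ^^^ c = 0) (hs : a + b + c = 2*m)
    (hm : m < 2^k) : a < 2^k := by
  by_contra h
  push_neg at h
  have hp2 : (2:ℕ)^(k+1) = 2*2^k := by ring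
  have hta : a.testBit k = true := testBit_true_of h (by omega)
  have htb : b.testBit k = false := Nat.testBit_eq_false_of_lt (by omega)
  have htc : c.testBit k = false := Nat.testBit_eq_false_of_lt (by omega)
  have := congrArg (fun n => n.testBit k) hx
  simp [hta, htb, htc] at this

lemma lt_of_sol' {k m a b c : ℕ} (hx : a ^^^ b ^^^ c = 0) (hs : a + b + c = 2*m)
    (hm : m < 2^k) : a < 2^k ∧ b < 2^k ∧ c < 2^k :=
  ⟨lt_of_sol hx hs hm,
   lt_of_sol (show b ^^^ a ^^^ c = 0 by rw [← hx]; ac_rfl) (by omega) hm,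
   lt_of_sol (show c ^^^ b ^^^ a = 0 by rw [← hx]; ac_rfl) (by omega) hm⟩

/-- The set of solutions `(a,b,c)` in nonnegative integers of
`a + b + c = 2m`, `a ⊕ b ⊕ c = 0` (Nim-sum / bitwise xor). -/
def nimSol (m : ℕ) : Set (ℕ × ℕ × ℕ) :=
  {t | t.1 + t.2.1 + t.2.2 = 2 * m ∧ t.1 ^^^ t.2.1 ^^^ t.2.2 = 0}

/-- For `q = 2^k` and `0 ≤ m < q`, each solution `(a,b,c)` of `a+b+c = 2m`, `a⊕b⊕c = 0`
corresponds bijectively to exactly three solutions of `A+B+C = 2(m+q)`, `A⊕B⊕C = 0`,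
namely `(a+q,b+q,c)`, `(a+q,b,c+q)` and `(a,b+q,c+q)`: the resulting map from
(solutions of the first system) × {0,1,2} to solutions of the second system is a bijection. -/
theorem stmt_2 (k m : ℕ) (hm : m < 2 ^ k) :
    Set.BijOn
      (fun x : (ℕ × ℕ × ℕ) × Fin 3 =>
        if x.2 = 0 then (x.1.1 + 2 ^ k, x.1.2.1 + 2 ^ k, x.1.2.2)
        else if x.2 = 1 then (x.1.1 + 2 ^ k, x.1.2.1, x.1.2.2 + 2 ^ k)
        else (x.1.1, x.1.2.1 + 2 ^ k, x.1.2.2 + 2 ^ k))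
      (nimSol m ×ˢ (Set.univ : Set (Fin 3)))
      (nimSol (m + 2 ^ k)) := by
  have hp2 : (2:ℕ)^(k+1) = 2*2^k := by ring
  refine ⟨?_, ?_, ?_⟩
  · rintro ⟨⟨a, b, c⟩, i⟩ ⟨⟨hs, hx⟩, -⟩
    have hs : a + b + c = 2*m := hs
    have hx : a ^^^ b ^^^ c = 0 := hx
    obtain ⟨ha, hb, hc⟩ := lt_of_sol' hx hs hm
    fin_cases i
    · exact ⟨show a + 2^k + (b + 2^k) + c = 2*(m + 2^k) by omega,
        show (a + 2^k) ^^^ (b + 2^k) ^^^ c = 0 by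
          rw [add_pow_xor ha, add_pow_xor hb, xor_shuffle1]; exact hx⟩
    · exact ⟨show a + 2^k + b + (c + 2^k) = 2*(m + 2^k) by omega,
        show (a + 2^k) ^^^ b ^^^ (c + 2^k) = 0 by
          rw [add_pow_xor ha, add_pow_xor hc, xor_shuffle2]; exact hx⟩
    · exact ⟨show a + (b + 2^k) + (c + 2^k) = 2*(m + 2^k) by omega,
        show a ^^^ (b + 2^k) ^^^ (c + 2^k) = 0 by
          rw [add_pow_xor hb, add_pow_xor hc, xor_shuffle3]; exact hx⟩
  · rintro ⟨⟨a, b, c⟩, i⟩ ⟨⟨hs, hx⟩, -⟩ ⟨⟨a', b', c'⟩, i'⟩ ⟨⟨hs', hx'⟩, -⟩ heq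
    have hs : a + b + c = 2*m := hs
    have hx : a ^^^ b ^^^ c = 0 := hx
    have hs' : a' + b' + c' = 2*m := hs'
    have hx' : a' ^^^ b' ^^^ c' = 0 := hx'
    obtain ⟨ha, hb, hc⟩ := lt_of_sol' hx hs hm
    obtain ⟨ha', hb', hc'⟩ := lt_of_sol' hx' hs' hm
    fin_cases i <;> fin_cases i' <;>
      simp [Fin.ext_iff, Prod.mk.injEq] at heq ⊢ <;> omega
  · rintro ⟨A, B, C⟩ ⟨hs, hx⟩
    have hs : A + B + C = 2*(m + 2^k) := hs
    have hx : A ^^^ B ^^^ C = 0 := hx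
    have hmq : m + 2^k < 2^(k+1) := by omega
    obtain ⟨hA, hB, hC⟩ := lt_of_sol' hx hs hmq
    have key : ∀ n : ℕ, n < 2^(k+1) → (n.testBit k = true ↔ 2^k ≤ n) := by
      intro n hn
      constructor
      · intro h; by_contra h'; rw [Nat.testBit_eq_false_of_lt (by omega)] at h; simp at h
      · intro h; exact testBit_true_of h hn
    have hxk := congrArg (fun n => n.testBit k) hx
    simp only [Nat.testBit_xor, Nat.zero_testBit] at hxk
    by_cases hA2 : 2^k ≤ A <;> by_cases hB2 : 2^k ≤ B <;> by_cases hC2 : 2^k ≤ C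
    · -- all three ≥ 2^k : impossible by parity
      rw [(key A hA).2 hA2, (key B hB).2 hB2, (key C hC).2 hC2] at hxk
      simp at hxk
    · -- A,B ≥ : index 0
      refine ⟨⟨⟨A - 2^k, B - 2^k, C⟩, 0⟩, ⟨⟨show A - 2^k + (B - 2^k) + C = 2*m by omega, ?_⟩, trivial⟩, ?_⟩
      · show (A - 2^k) ^^^ (B - 2^k) ^^^ C = 0
        have e1 : A = (A - 2^k) ^^^ 2^k := by rw [← add_pow_xor (by omega)]; omega
        have e2 : B = (B - 2^k) ^^^ 2^k := by rw [← add_pow_xor (by omega)]; omega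
        rw [← xor_shuffle1 (2^k), ← e1, ← e2]; exact hx
      · show ((A - 2^k + 2^k, B - 2^k + 2^k, C) : ℕ×ℕ×ℕ) = (A, B, C)
        simp only [Prod.mk.injEq, and_true, true_and]; omega
    · -- A,C ≥ : index 1
      refine ⟨⟨⟨A - 2^k, B, C - 2^k⟩, 1⟩, ⟨⟨show A - 2^k + B + (C - 2^k) = 2*m by omega, ?_⟩, trivial⟩, ?_⟩
      · show (A - 2^k) ^^^ B ^^^ (C - 2^k) = 0
        have e1 : A = (A - 2^k) ^^^ 2^k := by rw [← add_pow_xor (by omega)]; omega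
        have e2 : C = (C - 2^k) ^^^ 2^k := by rw [← add_pow_xor (by omega)]; omega
        rw [← xor_shuffle2 (2^k), ← e1, ← e2]; exact hx
      · show ((A - 2^k + 2^k, B, C - 2^k + 2^k) : ℕ×ℕ×ℕ) = (A, B, C)
        simp only [Prod.mk.injEq, and_true, true_and]; omega
    · -- only A ≥ : parity violation
      rw [(key A hA).2 hA2, Nat.testBit_eq_false_of_lt (show B < 2^k by omega),
        Nat.testBit_eq_false_of_lt (show C < 2^k by omega)] at hxk
      simp at hxk
    · -- B,C ≥ : index 2
      refine ⟨⟨⟨A, B - 2^k, C - 2^k⟩, 2⟩, ⟨⟨show A + (B - 2^k) + (C - 2^k) = 2*m by omega, ?_⟩, trivial⟩, ?_⟩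
      · show A ^^^ (B - 2^k) ^^^ (C - 2^k) = 0
        have e1 : B = (B - 2^k) ^^^ 2^k := by rw [← add_pow_xor (by omega)]; omega
        have e2 : C = (C - 2^k) ^^^ 2^k := by rw [← add_pow_xor (by omega)]; omega
        rw [← xor_shuffle3 (2^k), ← e1, ← e2]; exact hx
      · show ((A, B - 2^k + 2^k, C - 2^k + 2^k) : ℕ×ℕ×ℕ) = (A, B, C)
        simp only [Prod.mk.injEq, and_true, true_and]; omega
    · rw [(key B hB).2 hB2, Nat.testBit_eq_false_of_lt (show A < 2^k by omega),
        Nat.testBit_eq_false_of_lt (show C < 2^k by omega)] at hxk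
      simp at hxk
    · rw [(key C hC).2 hC2, Nat.testBit_eq_false_of_lt (show A < 2^k by omega),
        Nat.testBit_eq_false_of_lt (show B < 2^k by omega)] at hxk
      simp at hxk
    · -- all < 2^k: sum too small
      have := sum3_le (k := k) hx (by omega) (by omega) (by omega)
      omega
end

section
/- For q = 2^k and 0 ≤ m < q, the Nim polynomial satisfies N_{q+m} = (x₁^q x₂^q + x₁^q x₃^q + x₂^q x₃^q) · N_m in ℤ[x₁,x₂,x₃]/⟨x₁x₂x₃ - 1⟩. -/
open MvPolynomial

/-- The trivariate Nim polynomial `N_m`: the sum of the monomials `x₁^a x₂^b x₃^c` over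
all nonnegative integers `a, b, c` with `a + b + c = 2m` and Nim-sum `a ⊕ b ⊕ c = 0`. -/
noncomputable def nimPoly (m : ℕ) : MvPolynomial (Fin 3) ℤ :=
  ∑ t ∈ (Finset.range (2 * m + 1) ×ˢ Finset.range (2 * m + 1) ×ˢ
      Finset.range (2 * m + 1)).filter
      (fun t => t.1 + t.2.1 + t.2.2 = 2 * m ∧ t.1 ^^^ t.2.1 ^^^ t.2.2 = 0),
    X 0 ^ t.1 * X 1 ^ t.2.1 * X 2 ^ t.2.2

/-- The relation ideal `⟨x₁x₂x₃ - 1⟩` defining `A = ℤ[x₁,x₂,x₃]/⟨x₁x₂x₃-1⟩`. -/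
noncomputable def nimRel : Ideal (MvPolynomial (Fin 3) ℤ) :=
  Ideal.span {X 0 * X 1 * X 2 - 1}

/-! Every Nim triple of weight `2n` has the form `(a, b, a ⊕ b)` with `a ∨ b = n` (bitwise
or), because `a + b + (a ⊕ b) = 2 (a ∨ b)`. For `q = 2^k` and `m < q`, splitting `a` and `b`
into high parts `a / q, b / q` and low parts `a % q, b % q` shows that `a ∨ b = q n + m` exactly
when the high parts have `∨` equal to `n` and the low parts `∨` equal to `m`. Hence
`N_{qn+m}(x₁, x₂, x₃) = N_n(x₁^q, x₂^q, x₃^q) · N_m(x₁, x₂, x₃)` already in `ℤ[x₁, x₂, x₃]`, and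
`N_1 = x₁x₂ + x₁x₃ + x₂x₃`. -/

namespace Nat

theorem add_add_xor_eq_two_mul_or (a b : ℕ) : a + b + (a ^^^ b) = 2 * (a ||| b) := by
  induction a using Nat.binaryRec generalizing b with
  | zero => rw [Nat.zero_xor, Nat.zero_or]; omega
  | bit x a ih =>
    induction b using Nat.bitCasesOn with
    | bit y b =>
      rw [xor_bit, lor_bit, bit_val, bit_val, bit_val, bit_val]
      have hbit : x.toNat + y.toNat + (bne x y).toNat = 2 * (x || y).toNat := by
        cases x <;> cases y <;> rfl
      have := ih b
      omega

theorem add_add_eq_two_mul_and_xor_xor_eq_zero_iff {a b c n : ℕ} :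
    a + b + c = 2 * n ∧ a ^^^ b ^^^ c = 0 ↔ c = a ^^^ b ∧ a ||| b = n := by
  rw [Nat.xor_eq_zero_iff, eq_comm (a := a ^^^ b)]
  constructor
  · rintro ⟨hsum, rfl⟩
    have := add_add_xor_eq_two_mul_or a b
    exact ⟨rfl, by omega⟩
  · rintro ⟨rfl, rfl⟩
    exact ⟨add_add_xor_eq_two_mul_or a b, rfl⟩

theorem two_pow_mul_add_div {k u v : ℕ} (hv : v < 2 ^ k) : (2 ^ k * u + v) / 2 ^ k = u := by
  rw [Nat.mul_add_div (Nat.two_pow_pos k), Nat.div_eq_of_lt hv, add_zero]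

theorem two_pow_mul_add_mod {k u v : ℕ} (hv : v < 2 ^ k) : (2 ^ k * u + v) % 2 ^ k = v := by
  rw [Nat.mul_add_mod, Nat.mod_eq_of_lt hv]

theorem or_eq_two_pow_mul_add_iff {a b k n m : ℕ} (hm : m < 2 ^ k) :
    a ||| b = 2 ^ k * n + m ↔ a / 2 ^ k ||| b / 2 ^ k = n ∧ a % 2 ^ k ||| b % 2 ^ k = m := by
  rw [← or_div_two_pow, ← or_mod_two_pow]
  constructor
  · intro h
    rw [h, two_pow_mul_add_div hm, two_pow_mul_add_mod hm]
    exact ⟨rfl, rfl⟩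
  · rintro ⟨hdiv, hmod⟩
    rw [← Nat.div_add_mod (a ||| b) (2 ^ k), hdiv, hmod]

end Nat

def nimPairs (n : ℕ) : Finset (ℕ × ℕ) :=
  (Finset.range (n + 1) ×ˢ Finset.range (n + 1)).filter (fun p => p.1 ||| p.2 = n)

theorem mem_nimPairs {n : ℕ} {p : ℕ × ℕ} : p ∈ nimPairs n ↔ p.1 ||| p.2 = n := by
  simp only [nimPairs, Finset.mem_filter, Finset.mem_product, Finset.mem_range,
    and_iff_right_iff_imp]
  rintro rfl
  exact ⟨Nat.lt_succ_of_le Nat.left_le_or, Nat.lt_succ_of_le Nat.right_le_or⟩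

theorem le_of_mem_nimPairs {n : ℕ} {p : ℕ × ℕ} (hp : p ∈ nimPairs n) : p.1 ≤ n ∧ p.2 ≤ n :=
  mem_nimPairs.1 hp ▸ ⟨Nat.left_le_or, Nat.right_le_or⟩

noncomputable def nimMonomial (p : ℕ × ℕ) : MvPolynomial (Fin 3) ℤ :=
  X 0 ^ p.1 * X 1 ^ p.2 * X 2 ^ (p.1 ^^^ p.2)

theorem nimPoly_eq_sum_nimPairs (n : ℕ) : nimPoly n = ∑ p ∈ nimPairs n, nimMonomial p := by
  have mem_triples (t : ℕ × ℕ × ℕ) :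
      t ∈ (Finset.range (2 * n + 1) ×ˢ Finset.range (2 * n + 1) ×ˢ
        Finset.range (2 * n + 1)).filter
        (fun t => t.1 + t.2.1 + t.2.2 = 2 * n ∧ t.1 ^^^ t.2.1 ^^^ t.2.2 = 0) ↔
      t.2.2 = t.1 ^^^ t.2.1 ∧ t.1 ||| t.2.1 = n := by
    rw [Finset.mem_filter, ← Nat.add_add_eq_two_mul_and_xor_xor_eq_zero_iff,
      and_iff_right_iff_imp]
    simp only [Finset.mem_product, Finset.mem_range]
    omega
  refine Finset.sum_nbij' (fun t => (t.1, t.2.1)) (fun p => (p.1, p.2, p.1 ^^^ p.2))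
    ?_ ?_ ?_ ?_ ?_
  · rintro ⟨a, b, c⟩ ht
    exact mem_nimPairs.2 ((mem_triples _).1 ht).2
  · rintro ⟨a, b⟩ hp
    exact (mem_triples _).2 ⟨rfl, mem_nimPairs.1 hp⟩
  · rintro ⟨a, b, c⟩ ht
    obtain ⟨hc : c = a ^^^ b, -⟩ := (mem_triples _).1 ht
    rw [hc]
  · rintro p -
    rfl
  · rintro ⟨a, b, c⟩ ht
    obtain ⟨hc : c = a ^^^ b, -⟩ := (mem_triples _).1 ht
    rw [nimMonomial, hc]

theorem nimMonomial_eq_expand_mul (k : ℕ) (p : ℕ × ℕ) :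
    nimMonomial p = expand (2 ^ k) (nimMonomial (p.1 / 2 ^ k, p.2 / 2 ^ k)) *
      nimMonomial (p.1 % 2 ^ k, p.2 % 2 ^ k) := by
  have split (i : Fin 3) (a : ℕ) :
      (X i : MvPolynomial (Fin 3) ℤ) ^ a = (X i ^ 2 ^ k) ^ (a / 2 ^ k) * X i ^ (a % 2 ^ k) := by
    rw [← pow_mul, ← pow_add, Nat.div_add_mod]
  rw [nimMonomial, split 0 p.1, split 1 p.2, split 2 (p.1 ^^^ p.2), Nat.xor_div_two_pow,
    Nat.xor_mod_two_pow]
  simp only [nimMonomial, map_mul, map_pow, expand_X]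
  ring

theorem nimPoly_two_pow_mul_add {k m : ℕ} (hm : m < 2 ^ k) (n : ℕ) :
    nimPoly (2 ^ k * n + m) = expand (2 ^ k) (nimPoly n) * nimPoly m := by
  simp only [nimPoly_eq_sum_nimPairs, map_sum, Finset.sum_mul_sum, ← Finset.sum_product']
  have mem_iff (p : ℕ × ℕ) : p ∈ nimPairs (2 ^ k * n + m) ↔
      ((p.1 / 2 ^ k, p.2 / 2 ^ k), (p.1 % 2 ^ k, p.2 % 2 ^ k)) ∈ nimPairs n ×ˢ nimPairs m := by
    rw [mem_nimPairs, Nat.or_eq_two_pow_mul_add_iff hm, Finset.mem_product, mem_nimPairs,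
      mem_nimPairs]
  have high_low (u v : ℕ × ℕ) (hv : v ∈ nimPairs m) :
      (((2 ^ k * u.1 + v.1) / 2 ^ k, (2 ^ k * u.2 + v.2) / 2 ^ k),
        ((2 ^ k * u.1 + v.1) % 2 ^ k, (2 ^ k * u.2 + v.2) % 2 ^ k)) = (u, v) := by
    obtain ⟨hv₁, hv₂⟩ := le_of_mem_nimPairs hv
    rw [Nat.two_pow_mul_add_div (hv₁.trans_lt hm), Nat.two_pow_mul_add_div (hv₂.trans_lt hm),
      Nat.two_pow_mul_add_mod (hv₁.trans_lt hm), Nat.two_pow_mul_add_mod (hv₂.trans_lt hm)]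
  refine Finset.sum_nbij' (fun p => ((p.1 / 2 ^ k, p.2 / 2 ^ k), (p.1 % 2 ^ k, p.2 % 2 ^ k)))
    (fun uv => (2 ^ k * uv.1.1 + uv.2.1, 2 ^ k * uv.1.2 + uv.2.2)) ?_ ?_ ?_ ?_ ?_
  · exact fun p hp => (mem_iff p).1 hp
  · rintro ⟨u, v⟩ huv
    exact (mem_iff _).2 ((high_low u v (Finset.mem_product.1 huv).2).symm ▸ huv)
  · rintro ⟨a, b⟩ -
    simp only [Nat.div_add_mod]
  · rintro ⟨u, v⟩ huv
    exact high_low u v (Finset.mem_product.1 huv).2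
  · exact fun p _ => nimMonomial_eq_expand_mul k p

theorem nimPoly_one : nimPoly 1 = X 0 * X 1 + X 0 * X 2 + X 1 * X 2 := by
  have : nimPairs 1 = {(0, 1), (1, 0), (1, 1)} := by decide
  rw [nimPoly_eq_sum_nimPairs, this, Finset.sum_insert (by decide), Finset.sum_insert (by decide),
    Finset.sum_singleton]
  simp only [nimMonomial, Nat.reduceXor, pow_zero, pow_one]
  ring
/-- For `q = 2^k` and `0 ≤ m < q`, the Nim polynomial satisfies
`N_{q+m} = (x₁^q x₂^q + x₁^q x₃^q + x₂^q x₃^q) · N_m` in `ℤ[x₁,x₂,x₃]/⟨x₁x₂x₃-1⟩`. -/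
theorem stmt_5 (k m : ℕ) (hm : m < 2 ^ k) :
    Ideal.Quotient.mk nimRel (nimPoly (2 ^ k + m)) =
      Ideal.Quotient.mk nimRel
          (X 0 ^ (2 ^ k) * X 1 ^ (2 ^ k) + X 0 ^ (2 ^ k) * X 2 ^ (2 ^ k) +
            X 1 ^ (2 ^ k) * X 2 ^ (2 ^ k)) *
        Ideal.Quotient.mk nimRel (nimPoly m) := by
  have h := nimPoly_two_pow_mul_add hm 1
  rw [mul_one, nimPoly_one] at h
  rw [h, map_mul]
  simp only [map_add, map_mul, expand_X]
end

section
/- In the ring A = ℤ[x₁,...,x_n]/⟨x₁⋯x_n - 1⟩, the q-truncated complete symmetric functions satisfy the duality (h_d^{(q)})^∨ = h_{n(q-1)-d}^{(q)} for 0 ≤ d ≤ n(q-1), where f^∨ is induced by x_i ↦ x_i^{-1}. -/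
open MvPolynomial

/-- The `q`-truncated complete symmetric polynomial `h_d^{(q)}` in `n` variables:
the sum of `x₁^{a₁}⋯x_n^{a_n}` over tuples of nonnegative integers with
`a₁ + ⋯ + a_n = d` and each `aᵢ < q`. -/
noncomputable def truncH (n q d : ℕ) : MvPolynomial (Fin n) ℤ :=
  ∑ s ∈ (Fintype.piFinset fun _ : Fin n => Finset.range q).filter
      (fun s => ∑ i, s i = d),
    ∏ i, X i ^ s i

/-- The relation ideal `⟨x₁⋯x_n - 1⟩` defining `A = ℤ[x₁,…,x_n]/⟨x₁⋯x_n-1⟩`. -/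
noncomputable def relId (n : ℕ) : Ideal (MvPolynomial (Fin n) ℤ) :=
  Ideal.span {(∏ i : Fin n, X i) - 1}

/-- The duality `f ↦ f^∨` on `A` induced by `xᵢ ↦ xᵢ⁻¹`; since `xᵢ⁻¹ = ∏_{j≠i} xⱼ`
modulo `x₁⋯x_n = 1`, it is induced by the substitution `xᵢ ↦ ∏_{j≠i} xⱼ`. -/
noncomputable def dualize (n : ℕ) (f : MvPolynomial (Fin n) ℤ) : MvPolynomial (Fin n) ℤ :=
  MvPolynomial.aeval (fun i : Fin n => ∏ j ∈ Finset.univ.erase i, (X j : MvPolynomial (Fin n) ℤ)) f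

lemma mk_pi_one (n : ℕ) : Ideal.Quotient.mk (relId n) (∏ i : Fin n, X i) = 1 := by
  have h : Ideal.Quotient.mk (relId n) ((∏ i : Fin n, X i) - 1) = 0 :=
    Ideal.Quotient.eq_zero_iff_mem.2 (Ideal.subset_span rfl)
  rw [map_sub, map_one, sub_eq_zero] at h
  exact h

lemma mk_shift (n c : ℕ) (f : Fin n → ℕ) :
    Ideal.Quotient.mk (relId n) (∏ j : Fin n, (X j : MvPolynomial (Fin n) ℤ) ^ (f j + c)) =
      Ideal.Quotient.mk (relId n) (∏ j : Fin n, (X j : MvPolynomial (Fin n) ℤ) ^ f j) := by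
  have : (∏ j : Fin n, (X j : MvPolynomial (Fin n) ℤ) ^ (f j + c))
      = (∏ j : Fin n, (X j : MvPolynomial (Fin n) ℤ) ^ f j) * (∏ j : Fin n, X j) ^ c := by
    rw [← Finset.prod_pow, ← Finset.prod_mul_distrib]
    exact Finset.prod_congr rfl fun j _ => by rw [pow_add]
  rw [this, map_mul, map_pow, mk_pi_one, one_pow, mul_one]

/-- In `A = ℤ[x₁,…,x_n]/⟨x₁⋯x_n - 1⟩` one has `(h_d^{(q)})^∨ = h_{n(q-1)-d}^{(q)}`
for `0 ≤ d ≤ n(q-1)`. -/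
theorem stmt_8 (n q d : ℕ) (hn : 1 ≤ n) (hq : 1 ≤ q) (hd : d ≤ n * (q - 1)) :
    Ideal.Quotient.mk (relId n) (dualize n (truncH n q d)) =
      Ideal.Quotient.mk (relId n) (truncH n q (n * (q - 1) - d)) := by
  classical
  unfold dualize truncH
  rw [map_sum, map_sum, map_sum]
  refine Finset.sum_bij' (fun s _ => fun j => q - 1 - s j) (fun s _ => fun j => q - 1 - s j)
    ?_ ?_ ?_ ?_ ?_
  · intro s hs
    simp only [Finset.mem_filter, Fintype.mem_piFinset, Finset.mem_range] at hs ⊢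
    obtain ⟨h1, h2⟩ := hs
    constructor
    · intro i; omega
    · have hle : ∀ j ∈ Finset.univ, s j ≤ q - 1 := fun j _ => by have := h1 j; omega
      rw [Finset.sum_tsub_distrib _ hle, Finset.sum_const, Finset.card_univ, Fintype.card_fin,
        smul_eq_mul, h2]
  · intro s hs
    simp only [Finset.mem_filter, Fintype.mem_piFinset, Finset.mem_range] at hs ⊢
    obtain ⟨h1, h2⟩ := hs
    constructor
    · intro i; omega
    · have hle : ∀ j ∈ Finset.univ, s j ≤ q - 1 := fun j _ => by have := h1 j; omega
      rw [Finset.sum_tsub_distrib _ hle, Finset.sum_const, Finset.card_univ, Fintype.card_fin,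
        smul_eq_mul, h2]
      omega
  · intro s hs
    simp only [Finset.mem_filter, Fintype.mem_piFinset, Finset.mem_range] at hs
    funext j
    have := hs.1 j
    simp only []
    omega
  · intro s hs
    simp only [Finset.mem_filter, Fintype.mem_piFinset, Finset.mem_range] at hs
    funext j
    have := hs.1 j
    simp only []
    omega
  · intro s hs
    simp only [Finset.mem_filter, Fintype.mem_piFinset, Finset.mem_range] at hs
    obtain ⟨h1, h2⟩ := hs
    have hsjd : ∀ j, s j ≤ d := fun j => h2 ▸ Finset.single_le_sum (fun i _ => Nat.zero_le _) (Finset.mem_univ j)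
    -- compute aeval of the monomial
    have step1 : (MvPolynomial.aeval (fun i : Fin n => ∏ j ∈ Finset.univ.erase i,
        (X j : MvPolynomial (Fin n) ℤ))) (∏ i, (X i : MvPolynomial (Fin n) ℤ) ^ s i)
        = ∏ j : Fin n, (X j : MvPolynomial (Fin n) ℤ) ^ (d - s j) := by
      rw [map_prod]
      simp only [map_pow, aeval_X]
      simp only [← Finset.prod_pow]
      rw [Finset.prod_comm' (t' := Finset.univ) (s' := fun j => Finset.univ.erase j)
        (fun x y => by simp [Finset.mem_erase, eq_comm, and_comm])]
      refine Finset.prod_congr rfl fun j _ => ?_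
      rw [Finset.prod_pow_eq_pow_sum]
      congr 1
      have := Finset.add_sum_erase Finset.univ s (Finset.mem_univ j)
      omega
    rw [step1]
    have key : Ideal.Quotient.mk (relId n) (∏ j : Fin n, (X j : MvPolynomial (Fin n) ℤ) ^ (d - s j))
        = Ideal.Quotient.mk (relId n) (∏ j : Fin n, (X j : MvPolynomial (Fin n) ℤ) ^ (q - 1 - s j)) := by
      rw [← mk_shift n (q - 1) (fun j => d - s j), ← mk_shift n d (fun j => q - 1 - s j)]
      congr 1
      refine Finset.prod_congr rfl fun j _ => ?_
      congr 1
      have h1j := h1 j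
      have h2j := hsjd j
      omega
    exact key
end
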